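/- arXiv:2405.09509 — 2 statements merged into one kernel-verified Lean document; each statement's English description precedes it below -/
import Mathlib

section
/- Fix a ∈ (0, 1) and b ≥ 0. There exists a unique cv_{1−a}(b) > 0 such that r(b; cv_{1−a}(b)) = a, where r(b; c) = Φ(−c − b) + Φ(−c + b). Moreover, the map b ↦ cv_{1−a}(b) is strictly increasing on [0, ∞). -/
open MeasureTheory ProbabilityTheory

/-!
Writing `φ` for the standard normal density, `∂r/∂c = -(φ(-c-b) + φ(-c+b)) < 0`, and
`r(b; 0) = Φ(-b) + Φ(b) = 1`, `r(b; c) → 0` as `c → ∞`, so each level `a ∈ (0, 1)` is reached at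
exactly one `c > 0`. Moreover `∂r/∂b = φ(b-c) - φ(b+c) > 0` for `b, c > 0`, because `φ` decreases
in `|x|`; so for `b₁ < b₂` and `c₂ ≤ c₁` we would get `a = r(b₁; c₁) < r(b₂; c₁) ≤ r(b₂; c₂) = a`.
-/

/-- Standard normal CDF. -/
noncomputable def Phi (x : ℝ) : ℝ := ((gaussianReal 0 1) (Set.Iic x)).toReal

/-- `r(b; c) = Φ(−c − b) + Φ(−c + b)`. -/
noncomputable def r (b c : ℝ) : ℝ := Phi (-c - b) + Phi (-c + b)

open Filter Topology Set

noncomputable def phi (x : ℝ) : ℝ := gaussianPDFReal 0 1 x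

lemma phi_pos (x : ℝ) : 0 < phi x := gaussianPDFReal_pos 0 1 x one_ne_zero

lemma integrable_phi : Integrable phi := integrable_gaussianPDFReal 0 1

lemma continuous_phi : Continuous phi := by
  unfold phi gaussianPDFReal
  fun_prop

lemma phi_neg (x : ℝ) : phi (-x) = phi x := by
  simp [phi, gaussianPDFReal]

lemma integral_phi : ∫ x, phi x = 1 := integral_gaussianPDFReal_eq_one 0 one_ne_zero

lemma phi_lt_phi_of_sq_lt_sq {s t : ℝ} (h : t ^ 2 < s ^ 2) : phi s < phi t := by
  simp only [phi, gaussianPDFReal]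
  gcongr ?_ * Real.exp ?_
  simp only [sub_zero, NNReal.coe_one]
  linarith

lemma Phi_eq_integral (x : ℝ) : Phi x = ∫ t in Iic x, phi t := by
  rw [Phi, gaussianReal_apply_eq_integral 0 one_ne_zero,
    ENNReal.toReal_ofReal (setIntegral_nonneg measurableSet_Iic
      fun t _ => gaussianPDFReal_nonneg 0 1 t)]
  rfl

lemma Phi_eq_cdf : Phi = cdf (gaussianReal 0 1) := by
  ext x
  rw [cdf_eq_real, Phi, measureReal_def]

lemma hasDerivAt_Phi (x : ℝ) : HasDerivAt Phi (phi x) x := by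
  have h : Phi = fun x => Phi 0 + ∫ t in (0 : ℝ)..x, phi t := by
    funext x
    rw [Phi_eq_integral, Phi_eq_integral, intervalIntegral.integral_Iic_sub_Iic
      integrable_phi.integrableOn integrable_phi.integrableOn |>.symm]
    ring
  rw [h]
  exact (intervalIntegral.integral_hasDerivAt_right integrable_phi.intervalIntegrable
    (continuous_phi.stronglyMeasurableAtFilter _ _) continuous_phi.continuousAt).const_add _

@[fun_prop]
lemma continuous_Phi : Continuous Phi := continuous_iff_continuousAt.2 fun x =>
  (hasDerivAt_Phi x).continuousAt

lemma Phi_neg (x : ℝ) : Phi (-x) = 1 - Phi x := by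
  have hsymm : ∫ t in Iic (-x), phi t = ∫ t in Ioi x, phi t := by
    simpa only [phi_neg, neg_neg] using integral_comp_neg_Iic (-x) phi
  have hsplit := intervalIntegral.integral_Iic_add_Ioi (b := x)
    integrable_phi.integrableOn integrable_phi.integrableOn
  rw [integral_phi] at hsplit
  rw [Phi_eq_integral, Phi_eq_integral, hsymm]
  linarith

lemma tendsto_Phi_atBot : Tendsto Phi atBot (𝓝 0) := Phi_eq_cdf ▸ tendsto_cdf_atBot _

lemma hasDerivAt_r_left (b c : ℝ) :
    HasDerivAt (fun b => r b c) (phi (-c + b) - phi (-c - b)) b := by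
  have h1 := (hasDerivAt_Phi (-c - b)).comp b ((hasDerivAt_id b).const_sub (-c))
  have h2 := (hasDerivAt_Phi (-c + b)).comp b ((hasDerivAt_id b).const_add (-c))
  exact (h1.add h2).congr_deriv (by ring)

lemma hasDerivAt_r_right (b c : ℝ) :
    HasDerivAt (r b) (-(phi (-c - b) + phi (-c + b))) c := by
  have h1 := (hasDerivAt_Phi (-c - b)).comp c ((hasDerivAt_neg c).sub_const b)
  have h2 := (hasDerivAt_Phi (-c + b)).comp c ((hasDerivAt_neg c).add_const b)
  exact (h1.add h2).congr_deriv (by ring)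

lemma continuous_r (b : ℝ) : Continuous (r b) := by
  unfold r
  fun_prop

lemma strictAnti_r (b : ℝ) : StrictAnti (r b) :=
  strictAnti_of_hasDerivAt_neg (hasDerivAt_r_right b) fun c => by
    linarith [phi_pos (-c - b), phi_pos (-c + b)]

lemma strictMonoOn_r_left {c : ℝ} (hc : 0 < c) : StrictMonoOn (fun b => r b c) (Ici 0) := by
  refine strictMonoOn_of_deriv_pos (convex_Ici 0) ?_ fun b hb => ?_
  · exact HasDerivAt.continuousOn fun b _ => hasDerivAt_r_left b c
  · rw [interior_Ici] at hb
    rw [(hasDerivAt_r_left b c).deriv, sub_pos]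
    exact phi_lt_phi_of_sq_lt_sq (by nlinarith [mem_Ioi.1 hb])

lemma r_zero (b : ℝ) : r b 0 = 1 := by
  simp [r, Phi_neg b]

lemma tendsto_r_atTop (b : ℝ) : Tendsto (r b) atTop (𝓝 0) := by
  have h1 : Tendsto (fun c : ℝ => -c - b) atTop atBot :=
    tendsto_atBot_add_const_right _ _ tendsto_neg_atTop_atBot
  have h2 : Tendsto (fun c : ℝ => -c + b) atTop atBot :=
    tendsto_atBot_add_const_right _ _ tendsto_neg_atTop_atBot
  exact add_zero (0 : ℝ) ▸ (tendsto_Phi_atBot.comp h1).add (tendsto_Phi_atBot.comp h2)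

lemma existsUnique_pos_eq_of_strictAnti {f : ℝ → ℝ} (hcont : Continuous f)
    (hanti : StrictAnti f) {l a : ℝ} (hlim : Tendsto f atTop (𝓝 l)) (ha : a ∈ Ioo l (f 0)) :
    ∃! c, 0 < c ∧ f c = a := by
  obtain ⟨M, hMa, hM⟩ := ((hlim.eventually_lt_const ha.1).and (eventually_gt_atTop 0)).exists
  obtain ⟨c, hc, hfc⟩ := intermediate_value_Ioo' hM.le hcont.continuousOn ⟨hMa, ha.2⟩
  exact ⟨c, ⟨hc.1, hfc⟩, fun c' hc' => hanti.injective (hc'.2.trans hfc.symm)⟩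

/-- For `a ∈ (0,1)` and each `b ≥ 0` there is a unique `c > 0` with
`r(b; c) = a`; moreover this critical value is strictly increasing in `b` on `[0, ∞)`. -/
theorem stmt3 (a : ℝ) (ha : a ∈ Set.Ioo (0:ℝ) 1) :
    (∀ b : ℝ, 0 ≤ b → ∃! c : ℝ, 0 < c ∧ r b c = a) ∧
    (∀ b₁ b₂ c₁ c₂ : ℝ, 0 ≤ b₁ → b₁ < b₂ →
      0 < c₁ → r b₁ c₁ = a → 0 < c₂ → r b₂ c₂ = a → c₁ < c₂) := by
  refine ⟨fun b _ => ?_, fun b₁ b₂ c₁ c₂ hb₁ hb hc₁ hr₁ _ hr₂ => ?_⟩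
  · exact existsUnique_pos_eq_of_strictAnti (continuous_r b) (strictAnti_r b)
      (tendsto_r_atTop b) (by rwa [r_zero])
  · by_contra! hle
    have hb : r b₁ c₁ < r b₂ c₁ :=
      strictMonoOn_r_left hc₁ (mem_Ici.2 hb₁) (mem_Ici.2 (hb₁.trans hb.le)) hb
    have hc : r b₂ c₁ ≤ r b₂ c₂ := (strictAnti_r b₂).antitone hle
    linarith
end

section
/- Let A be the np × np companion matrix of n × n matrices A₁, …, A_p (first block row (A₁, …, A_p), identity blocks on the subdiagonal, zeros elsewhere). Then the eigenvalues of A are exactly the roots z of det(z^p I − z^{p−1} A₁ − ⋯ − A_p) = 0; in particular A has spectral radius < 1 if and only if all roots of the VAR(p) characteristic polynomial lie strictly inside the unit circle. -/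
open Matrix

lemma det_eq_zero_iff_mem_spectrum' {m : Type*} [Fintype m] [DecidableEq m]
    (M : Matrix m m ℂ) (z : ℂ) :
    z ∈ spectrum ℂ M ↔ (z • (1 : Matrix m m ℂ) - M).det = 0 := by
  rw [spectrum.mem_iff, Algebra.algebraMap_eq_smul_one, Matrix.isUnit_iff_isUnit_det,
    isUnit_iff_ne_zero, not_not]

lemma companion_key {n p : ℕ} (hp : 0 < p) (Ai : Fin p → Matrix (Fin n) (Fin n) ℝ)
    (A : Matrix (Fin p × Fin n) (Fin p × Fin n) ℝ)
    (hA : A = Matrix.of fun ik jl =>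
      if (ik.1 : ℕ) = 0 then Ai jl.1 ik.2 jl.2
      else if (ik.1 : ℕ) = (jl.1 : ℕ) + 1 then (if ik.2 = jl.2 then 1 else 0) else 0)
    (z : ℂ) :
    z ∈ spectrum ℂ (A.map (Complex.ofReal ·)) ↔
      Matrix.det (z ^ p • (1 : Matrix (Fin n) (Fin n) ℂ)
        - ∑ i : Fin p, z ^ (p - 1 - (i : ℕ)) • (Ai i).map (Complex.ofReal ·)) = 0 := by
  rw [det_eq_zero_iff_mem_spectrum', ← Matrix.exists_mulVec_eq_zero_iff,
    ← Matrix.exists_mulVec_eq_zero_iff]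
  set B : Fin p → Matrix (Fin n) (Fin n) ℂ := fun i => (Ai i).map (Complex.ofReal ·) with hB
  have hA' : ∀ (i : Fin p) (k : Fin n) (j : Fin p) (l : Fin n),
      (A.map (Complex.ofReal ·)) (i,k) (j,l) =
      if (i : ℕ) = 0 then B j k l
      else if (i : ℕ) = (j : ℕ) + 1 then (if k = l then 1 else 0) else 0 := by
    intro i k j l
    simp only [hA, Matrix.map_apply, Matrix.of_apply, hB, apply_ite (Complex.ofReal ·)]
    norm_num
  have mulVec_row : ∀ (y : Fin p × Fin n → ℂ) (i : Fin p) (k : Fin n),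
      ((A.map (Complex.ofReal ·)).mulVec y) (i,k)
      = ∑ j : Fin p, ∑ l : Fin n,
        (if (i : ℕ) = 0 then B j k l
         else if (i : ℕ) = (j : ℕ) + 1 then (if k = l then 1 else 0) else 0) * y (j,l) := by
    intro y i k
    rw [Matrix.mulVec, dotProduct, Fintype.sum_prod_type]
    exact Finset.sum_congr rfl fun j _ => Finset.sum_congr rfl fun l _ => by rw [hA']
  have row_shift : ∀ (y : Fin p × Fin n → ℂ) (i : Fin p), (i : ℕ) ≠ 0 → ∀ k : Fin n,
      ((A.map (Complex.ofReal ·)).mulVec y) (i,k)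
        = y (⟨(i : ℕ) - 1, by omega⟩, k) := by
    intro y i hi k
    rw [mulVec_row]
    have inner : ∀ j : Fin p, (∑ l : Fin n,
        (if (i : ℕ) = 0 then B j k l
         else if (i : ℕ) = (j : ℕ) + 1 then (if k = l then 1 else 0) else 0) * y (j,l))
        = if (i : ℕ) = (j : ℕ) + 1 then y (j, k) else 0 := by
      intro j
      by_cases hij : (i : ℕ) = (j : ℕ) + 1
      · rw [if_pos hij]
        have : ∀ l : Fin n,
            (if (i : ℕ) = 0 then B j k l
             else if (i : ℕ) = (j : ℕ) + 1 then (if k = l then 1 else 0) else 0) * y (j,l)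
            = (if k = l then 1 else 0) * y (j, l) := fun l => by
          rw [if_neg hi, if_pos hij]
        rw [Finset.sum_congr rfl fun l _ => this l]
        simp [ite_mul]
      · rw [if_neg hij]
        have : ∀ l : Fin n,
            (if (i : ℕ) = 0 then B j k l
             else if (i : ℕ) = (j : ℕ) + 1 then (if k = l then 1 else 0) else 0) * y (j,l)
            = 0 := fun l => by
          rw [if_neg hi, if_neg hij, zero_mul]
        rw [Finset.sum_congr rfl fun l _ => this l]
        simp
    rw [Finset.sum_congr rfl fun j _ => inner j]
    rw [Finset.sum_eq_single (⟨(i : ℕ) - 1, by omega⟩ : Fin p)]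
    · rw [if_pos (by omega : (i : ℕ) = (i : ℕ) - 1 + 1)]
    · intro j _ hj
      rw [if_neg]
      intro hcon
      exact hj (Fin.ext (show (j : ℕ) = (i : ℕ) - 1 by omega))
    · simp
  constructor
  · rintro ⟨y, hy0, hy⟩
    have key : ∀ (i : Fin p) (k : Fin n),
        ((A.map (Complex.ofReal ·)).mulVec y) (i, k) = z * y (i, k) := by
      intro i k
      have h := congrFun hy (i, k)
      simp only [Matrix.sub_mulVec, Pi.sub_apply, Matrix.smul_mulVec,
        Matrix.one_mulVec, Pi.smul_apply, smul_eq_mul, Pi.zero_apply] at h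
      linear_combination -h
    set w : Fin n → ℂ := fun k => y (⟨p - 1, by omega⟩, k) with hw
    have desc : ∀ d, d ≤ p - 1 → ∀ k : Fin n,
        y (⟨p - 1 - d, by omega⟩, k) = z ^ d * w k := by
      intro d
      induction d with
      | zero => intro _ k; simp [hw]
      | succ d ih =>
        intro hd k
        have hd' : d ≤ p - 1 := by omega
        have hne : ((⟨p - 1 - d, by omega⟩ : Fin p) : ℕ) ≠ 0 := by simp; omega
        have h1 := row_shift y ⟨p - 1 - d, by omega⟩ hne k
        rw [key] at h1
        have hidx : (⟨(p - 1 - d : ℕ) - 1, by omega⟩ : Fin p)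
            = (⟨p - 1 - (d + 1), by omega⟩ : Fin p) := Fin.ext (by simp; omega)
        rw [hidx] at h1
        rw [← h1, ih hd', pow_succ]
        ring
    have gen : ∀ (i : Fin p) (k : Fin n), y (i, k) = z ^ (p - 1 - (i : ℕ)) * w k := by
      intro i k
      have hi : (⟨p - 1 - (p - 1 - (i : ℕ)), by omega⟩ : Fin p) = i :=
        Fin.ext (by simp; omega)
      have := desc (p - 1 - (i : ℕ)) (by omega) k
      rwa [hi] at this
    have hw0 : w ≠ 0 := by
      intro hcon
      apply hy0
      funext ik
      rw [show ik = (ik.1, ik.2) from rfl, gen, hcon]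
      simp
    refine ⟨w, hw0, ?_⟩
    funext k
    have h0 := key ⟨0, hp⟩ k
    rw [mulVec_row] at h0
    simp only [show ((⟨0, hp⟩ : Fin p) : ℕ) = 0 from rfl, eq_self_iff_true, if_true] at h0
    have hrw : ∀ j : Fin p, (∑ l : Fin n, B j k l * y (j, l))
        = z ^ (p - 1 - (j : ℕ)) * ∑ l : Fin n, B j k l * w l := by
      intro j
      rw [Finset.mul_sum]
      exact Finset.sum_congr rfl fun l _ => by rw [gen]; ring
    rw [Finset.sum_congr rfl fun j _ => hrw j] at h0
    have hy0k : y (⟨0, hp⟩, k) = z ^ (p - 1) * w k := by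
      have := gen ⟨0, hp⟩ k; simpa using this
    rw [hy0k] at h0
    -- h0 : ∑ j, z^(p-1-j) * ∑ l, B j k l * w l = z * (z^(p-1) * w k)
    simp only [Matrix.sub_mulVec, Pi.sub_apply, Matrix.smul_mulVec,
      Matrix.one_mulVec, Pi.smul_apply, smul_eq_mul, Pi.zero_apply]
    have hsum : ((∑ i : Fin p, z ^ (p - 1 - (i : ℕ)) • B i).mulVec w) k
        = ∑ j : Fin p, z ^ (p - 1 - (j : ℕ)) * ∑ l : Fin n, B j k l * w l := by
      rw [Matrix.mulVec, dotProduct]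
      simp only [Matrix.sum_apply, Matrix.smul_apply, smul_eq_mul, Finset.sum_mul]
      rw [Finset.sum_comm]
      refine Finset.sum_congr rfl fun j _ => ?_
      rw [Finset.mul_sum]
      exact Finset.sum_congr rfl fun l _ => by ring
    rw [hsum, h0, show z ^ p = z * z ^ (p - 1) by rw [← pow_succ']; congr 1; omega]
    ring
  · rintro ⟨w, hw0, hw⟩
    set y : Fin p × Fin n → ℂ := fun ik => z ^ (p - 1 - (ik.1 : ℕ)) * w ik.2 with hy
    have hy0 : y ≠ 0 := by
      intro hcon
      apply hw0
      funext k
      have := congrFun hcon (⟨p - 1, by omega⟩, k)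
      simpa [hy] using this
    refine ⟨y, hy0, ?_⟩
    have hwk : ∀ k : Fin n, ∑ j : Fin p, z ^ (p - 1 - (j : ℕ)) * ∑ l : Fin n, B j k l * w l
        = z ^ p * w k := by
      intro k
      have h := congrFun hw k
      simp only [Matrix.sub_mulVec, Pi.sub_apply, Matrix.smul_mulVec,
        Matrix.one_mulVec, Pi.smul_apply, smul_eq_mul, Pi.zero_apply] at h
      have hsum : ((∑ i : Fin p, z ^ (p - 1 - (i : ℕ)) • B i).mulVec w) k
          = ∑ j : Fin p, z ^ (p - 1 - (j : ℕ)) * ∑ l : Fin n, B j k l * w l := by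
        rw [Matrix.mulVec, dotProduct]
        simp only [Matrix.sum_apply, Matrix.smul_apply, smul_eq_mul, Finset.sum_mul]
        rw [Finset.sum_comm]
        refine Finset.sum_congr rfl fun j _ => ?_
        rw [Finset.mul_sum]
        exact Finset.sum_congr rfl fun l _ => by ring
      rw [hsum] at h
      linear_combination -h
    funext ik
    obtain ⟨i, k⟩ := ik
    simp only [Matrix.sub_mulVec, Pi.sub_apply, Matrix.smul_mulVec,
      Matrix.one_mulVec, Pi.smul_apply, smul_eq_mul, Pi.zero_apply]
    rw [sub_eq_zero]
    by_cases hi : (i : ℕ) = 0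
    · rw [mulVec_row]
      simp only [if_pos hi]
      have hrw : ∀ j : Fin p, (∑ l : Fin n, B j k l * y (j, l))
          = z ^ (p - 1 - (j : ℕ)) * ∑ l : Fin n, B j k l * w l := by
        intro j
        rw [Finset.mul_sum]
        exact Finset.sum_congr rfl fun l _ => by simp only [hy]; ring
      rw [Finset.sum_congr rfl fun j _ => hrw j, hwk k]
      simp only [hy, hi, Nat.sub_zero]
      rw [show z ^ p = z * z ^ (p - 1) by rw [← pow_succ']; congr 1; omega]
      ring
    · rw [row_shift y i hi k]
      simp only [hy]
      rw [show p - 1 - ((i : ℕ) - 1) = (p - 1 - (i : ℕ)) + 1 by omega, pow_succ]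
      ring


/-- The eigenvalues of the block companion matrix of `A₁, …, A_p` are
exactly the roots of `det(z^p I − z^{p−1} A₁ − ⋯ − A_p) = 0`; in particular its spectral
radius is `< 1` iff all roots of the VAR(p) characteristic polynomial lie strictly inside
the unit circle. -/
theorem stmt18 {n p : ℕ} (hp : 0 < p) (Ai : Fin p → Matrix (Fin n) (Fin n) ℝ)
    (A : Matrix (Fin p × Fin n) (Fin p × Fin n) ℝ)
    (hA : A = Matrix.of fun ik jl =>
      if (ik.1 : ℕ) = 0 then Ai jl.1 ik.2 jl.2
      else if (ik.1 : ℕ) = (jl.1 : ℕ) + 1 then (if ik.2 = jl.2 then 1 else 0) else 0) :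
    (∀ z : ℂ, z ∈ spectrum ℂ (A.map (Complex.ofReal ·)) ↔
      Matrix.det (z ^ p • (1 : Matrix (Fin n) (Fin n) ℂ)
        - ∑ i : Fin p, z ^ (p - 1 - (i : ℕ)) • (Ai i).map (Complex.ofReal ·)) = 0) ∧
    ((∀ z ∈ spectrum ℂ (A.map (Complex.ofReal ·)), ‖z‖ < 1) ↔
      (∀ z : ℂ, Matrix.det (z ^ p • (1 : Matrix (Fin n) (Fin n) ℂ)
        - ∑ i : Fin p, z ^ (p - 1 - (i : ℕ)) • (Ai i).map (Complex.ofReal ·)) = 0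
        → ‖z‖ < 1)) := by
  refine ⟨fun z => companion_key hp Ai A hA z, ?_⟩
  constructor
  · intro h z hz
    exact h z ((companion_key hp Ai A hA z).mpr hz)
  · intro h z hz
    exact h z ((companion_key hp Ai A hA z).mp hz)
end
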